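/- Let γ > 0 and let a_{m,n} = m!n!/(γ)_{m+n} (with a_{0,0} = 1) be the squared norms of monomials in H_γ, f = 1 − (√2/2)(z₁+z₂), and let φ_{j,k} be defined by the closed formula with coefficients c(j,k;m,n) = (√2/2)^{j+k−m−n}·((γ)_{m+n+1}/(γ)_{j+k+1})·(j!k!/(m!n!))·((j+k−m−n)!/((j−m)!(k−n)!)). Then for k ≥ 1: ⟨z₁^j z₂^k, φ_{j,k−1}⟩_f = −(√2/2)·j!k!/(γ)_{j+k}, where ⟨g,h⟩_f = ⟨gf,hf⟩ in H_γ. -/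
import Mathlib


open MvPolynomial

/-- Pochhammer symbol `(γ)_n = γ(γ+1)⋯(γ+n−1)`. -/
noncomputable def poch (γ : ℝ) (n : ℕ) : ℝ := ∏ i ∈ Finset.range n, (γ + i)

/-- Squared norms of the monomials `z₁^m z₂^n` in `H_γ`. -/
noncomputable def aw (γ : ℝ) (m n : ℕ) : ℝ :=
  if m = 0 ∧ n = 0 then 1 else ((m.factorial * n.factorial : ℕ) : ℝ) / poch γ (m + n)

/-- The exponent `(m,n)` as a monomial degree in two variables. -/
noncomputable def deg2 (m n : ℕ) : Fin 2 →₀ ℕ := Finsupp.single 0 m + Finsupp.single 1 n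

/-- The inner product on (the polynomials of) `H_γ`. -/
noncomputable def hip (γ : ℝ) (g h : MvPolynomial (Fin 2) ℂ) : ℂ :=
  ∑ᶠ m : ℕ, ∑ᶠ n : ℕ,
    ((aw γ m n : ℝ) : ℂ) * g.coeff (deg2 m n) * (starRingEnd ℂ) (h.coeff (deg2 m n))

/-- The weight `f = 1 − (√2/2)(z₁ + z₂)`. -/
noncomputable def fw : MvPolynomial (Fin 2) ℂ :=
  1 - MvPolynomial.C ((Real.sqrt 2 / 2 : ℝ) : ℂ) * (X 0 + X 1)

/-- Closed-form coefficients of the weighted orthogonal polynomials. -/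
noncomputable def c (γ : ℝ) (j k m n : ℕ) : ℝ :=
  (Real.sqrt 2 / 2) ^ (j + k - m - n) * (poch γ (m + n + 1) / poch γ (j + k + 1)) *
    ((j.factorial * k.factorial : ℕ) / ((m.factorial * n.factorial : ℕ) : ℝ)) *
    (((j + k - m - n).factorial : ℝ) / (((j - m).factorial * (k - n).factorial : ℕ) : ℝ))

/-- The orthogonal polynomial `φ_{j,k}` given by the closed formula. -/
noncomputable def phi (γ : ℝ) (j k : ℕ) : MvPolynomial (Fin 2) ℂ :=
  ∑ m ∈ Finset.range (j + 1), ∑ n ∈ Finset.range (k + 1),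
    MvPolynomial.C ((c γ j k m n : ℝ) : ℂ) * X 0 ^ m * X 1 ^ n

lemma poch_pos {γ : ℝ} (hγ : 0 < γ) (n : ℕ) : 0 < poch γ n :=
  Finset.prod_pos fun i _ => by positivity

lemma deg2_apply0 (m n : ℕ) : deg2 m n 0 = m := by
  simp [deg2, Finsupp.single_apply]

lemma deg2_apply1 (m n : ℕ) : deg2 m n 1 = n := by
  simp [deg2, Finsupp.single_apply]

lemma deg2_inj {a b m n : ℕ} : deg2 a b = deg2 m n ↔ a = m ∧ b = n := by
  constructor
  · intro h
    exact ⟨by rw [← deg2_apply0 a b, h, deg2_apply0],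
      by rw [← deg2_apply1 a b, h, deg2_apply1]⟩
  · rintro ⟨rfl, rfl⟩; rfl

lemma deg2_sub0 (j k : ℕ) : deg2 j k - Finsupp.single 0 1 = deg2 (j-1) k := by
  ext i
  fin_cases i <;> simp [deg2, Finsupp.single_apply, Finsupp.sub_apply]

lemma deg2_sub1 (j k : ℕ) : deg2 j k - Finsupp.single 1 1 = deg2 j (k-1) := by
  ext i
  fin_cases i <;> simp [deg2, Finsupp.single_apply, Finsupp.sub_apply]

lemma mem_support0 (m n : ℕ) : (0 : Fin 2) ∈ (deg2 m n).support ↔ m ≠ 0 := by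
  simp [Finsupp.mem_support_iff, deg2_apply0]

lemma mem_support1 (m n : ℕ) : (1 : Fin 2) ∈ (deg2 m n).support ↔ n ≠ 0 := by
  simp [Finsupp.mem_support_iff, deg2_apply1]

lemma coeff_XX (a b m n : ℕ) :
    (X 0 ^ a * X 1 ^ b : MvPolynomial (Fin 2) ℂ).coeff (deg2 m n)
      = if a = m ∧ b = n then 1 else 0 := by
  rw [show (X 0 ^ a * X 1 ^ b : MvPolynomial (Fin 2) ℂ) = monomial (deg2 a b) 1 by
    rw [X_pow_eq_monomial, X_pow_eq_monomial, monomial_mul, one_mul]; rfl, coeff_monomial]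
  simp [deg2_inj]

lemma coeff_phi (γ : ℝ) (j K m n : ℕ) :
    (phi γ j K).coeff (deg2 m n) = if m ≤ j ∧ n ≤ K then ((c γ j K m n : ℝ) : ℂ) else 0 := by
  have hterm : ∀ a b : ℕ, (MvPolynomial.C ((c γ j K a b : ℝ) : ℂ) * X 0 ^ a * X 1 ^ b)
      = monomial (deg2 a b) ((c γ j K a b : ℝ) : ℂ) := by
    intro a b
    rw [mul_assoc, X_pow_eq_monomial, X_pow_eq_monomial, monomial_mul, one_mul, C_mul_monomial,
      mul_one]
    rfl
  simp only [phi, coeff_sum, hterm, coeff_monomial, deg2_inj]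
  by_cases h : m ≤ j ∧ n ≤ K
  · obtain ⟨hm, hn⟩ := h
    rw [if_pos ⟨hm, hn⟩, Finset.sum_eq_single_of_mem m (by simp [Nat.lt_succ_iff, hm])]
    · rw [Finset.sum_eq_single_of_mem n (by simp [Nat.lt_succ_iff, hn])]
      · simp
      · intro b _ hb; simp [hb]
    · intro b _ hb
      exact Finset.sum_eq_zero fun x _ => by simp [hb]
  · rw [if_neg h]
    apply Finset.sum_eq_zero
    intro b hb
    apply Finset.sum_eq_zero
    intro x hx
    simp only [Finset.mem_range, Nat.lt_succ_iff] at hb hx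
    rw [if_neg]
    rintro ⟨rfl, rfl⟩
    exact h ⟨hb, hx⟩

lemma c_diag {γ : ℝ} (hγ : 0 < γ) (j K : ℕ) : c γ j K j K = 1 := by
  have h1 : poch γ (j + K + 1) ≠ 0 := (poch_pos hγ _).ne'
  have h2 : ((j.factorial * K.factorial : ℕ) : ℝ) ≠ 0 := by
    positivity
  simp only [c, Nat.sub_self, show j + K - j - K = 0 by omega, pow_zero, Nat.factorial_zero,
    div_self h1, Nat.cast_mul, Nat.cast_one, mul_one, one_mul]
  rw [div_self (by positivity), div_self (by positivity)]
  ring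

theorem monomial_phi_inner_product (γ : ℝ) (hγ : 0 < γ) (j k : ℕ) (hk : 1 ≤ k) :
    hip γ (X 0 ^ j * X 1 ^ k * fw) (phi γ j (k - 1) * fw)
      = ((-(Real.sqrt 2 / 2) * ((j.factorial * k.factorial : ℕ) : ℝ) / poch γ (j + k) : ℝ) : ℂ) := by
  set s : ℂ := ((Real.sqrt 2 / 2 : ℝ) : ℂ) with hs
  set P : MvPolynomial (Fin 2) ℂ := phi γ j (k-1) with hP
  -- coefficients of g
  have hgsplit : (X 0 ^ j * X 1 ^ k * fw : MvPolynomial (Fin 2) ℂ)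
      = X 0 ^ j * X 1 ^ k - MvPolynomial.C s * (X 0 ^ (j+1) * X 1 ^ k)
        - MvPolynomial.C s * (X 0 ^ j * X 1 ^ (k+1)) := by
    rw [fw]; ring
  have hgc : ∀ m n : ℕ, (X 0 ^ j * X 1 ^ k * fw : MvPolynomial (Fin 2) ℂ).coeff (deg2 m n)
      = (if j = m ∧ k = n then 1 else 0) - s * (if j+1 = m ∧ k = n then 1 else 0)
        - s * (if j = m ∧ k+1 = n then 1 else 0) := by
    intro m n
    rw [hgsplit, coeff_sub, coeff_sub, coeff_C_mul, coeff_C_mul, coeff_XX, coeff_XX, coeff_XX]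
  -- coefficients of h = P * fw
  have hhsplit : P * fw = P - MvPolynomial.C s * (P * X 0) - MvPolynomial.C s * (P * X 1) := by
    rw [fw]; ring
  have hPk : ∀ m n : ℕ, ¬ n ≤ k - 1 → P.coeff (deg2 m n) = 0 := by
    intro m n hn
    rw [hP, coeff_phi, if_neg (by tauto)]
  have hPj : ∀ m n : ℕ, ¬ m ≤ j → P.coeff (deg2 m n) = 0 := by
    intro m n hm
    rw [hP, coeff_phi, if_neg (by tauto)]
  have hc1 : (P * fw).coeff (deg2 j k) = -s := by
    rw [hhsplit, coeff_sub, coeff_sub, coeff_C_mul, coeff_C_mul, coeff_mul_X', coeff_mul_X']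
    rw [deg2_sub0, deg2_sub1]
    have t1 : P.coeff (deg2 j k) = 0 := hPk j k (by omega)
    have t3 : P.coeff (deg2 j (k-1)) = ((c γ j (k-1) j (k-1) : ℝ) : ℂ) := by
      rw [hP, coeff_phi, if_pos ⟨le_refl _, le_refl _⟩]
    rw [t1]
    rw [if_pos ((mem_support1 j k).2 (by omega))]
    rw [t3, c_diag hγ]
    by_cases hj : j = 0
    · subst hj
      rw [if_neg (by simp [Finsupp.mem_support_iff, deg2_apply0])]
      simp
    · rw [if_pos ((mem_support0 j k).2 hj)]
      rw [hPk (j-1) k (by omega)]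
      simp
  have hc2 : (P * fw).coeff (deg2 (j+1) k) = 0 := by
    rw [hhsplit, coeff_sub, coeff_sub, coeff_C_mul, coeff_C_mul, coeff_mul_X', coeff_mul_X']
    rw [deg2_sub0, deg2_sub1]
    rw [hPj (j+1) k (by omega), hPk (j+1-1) k (by omega), hPj (j+1) (k-1) (by omega)]
    simp
  have hc3 : (P * fw).coeff (deg2 j (k+1)) = 0 := by
    rw [hhsplit, coeff_sub, coeff_sub, coeff_C_mul, coeff_C_mul, coeff_mul_X', coeff_mul_X']
    rw [deg2_sub0, deg2_sub1]
    rw [hPk j (k+1) (by omega), hPk (j-1) (k+1) (by omega), hPk j (k+1-1) (by omega)]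
    simp
  -- the summand
  rw [hip]
  have key : (∑ᶠ m : ℕ, ∑ᶠ n : ℕ,
      ((aw γ m n : ℝ) : ℂ) * (X 0 ^ j * X 1 ^ k * fw).coeff (deg2 m n)
        * (starRingEnd ℂ) ((P * fw).coeff (deg2 m n)))
      = ((aw γ j k : ℝ) : ℂ) * (X 0 ^ j * X 1 ^ k * fw).coeff (deg2 j k)
        * (starRingEnd ℂ) ((P * fw).coeff (deg2 j k)) := by
    rw [finsum_eq_single _ j]
    · rw [finsum_eq_single _ k]
      intro n hn
      by_cases hn1 : n = k + 1
      · subst hn1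
        rw [hc3]
        simp
      · rw [hgc]
        rw [if_neg (by omega), if_neg (by omega), if_neg (by omega)]
        simp
    · intro m hm
      have : ∀ n : ℕ, ((aw γ m n : ℝ) : ℂ) * (X 0 ^ j * X 1 ^ k * fw).coeff (deg2 m n)
          * (starRingEnd ℂ) ((P * fw).coeff (deg2 m n)) = 0 := by
        intro n
        by_cases hm1 : m = j + 1
        · subst hm1
          by_cases hn1 : n = k
          · subst hn1; rw [hc2]; simp
          · rw [hgc, if_neg (by omega), if_neg (by omega), if_neg (by omega)]
            simp
        · rw [hgc, if_neg (by omega), if_neg (by omega), if_neg (by omega)]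
          simp
      simp only [this]
      exact finsum_zero
  rw [key, hgc, if_pos ⟨rfl, rfl⟩, if_neg (by omega), if_neg (by omega), hc1]
  have haw : aw γ j k = ((j.factorial * k.factorial : ℕ) : ℝ) / poch γ (j + k) := by
    rw [aw, if_neg (by omega)]
  rw [haw, hs]
  rw [map_neg, Complex.conj_ofReal]
  push_cast
  ring
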